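/- arXiv:2307.04546 — 6 statements merged into one kernel-verified Lean document; each statement's English description precedes it below -/
import Mathlib

section
/- (Monotonicity of non-blocking rendez-vous semantics) Let P be a rendez-vous protocol and C, C' configurations with C → C' in one step of the non-blocking semantics. Then for every configuration D with D ≥ C (pointwise on multiplicities), there exists a configuration D' with D → D' and D' ≥ C'. -/
inductive RVAct (A : Type) where
  | tau : RVAct A
  | send : A → RVAct A
  | recv : A → RVAct A
  deriving DecidableEq

/-- One step of the non-blocking rendez-vous semantics. -/
inductive NBStep {Q A : Type} [DecidableEq Q] (T : Set (Q × RVAct A × Q)) :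
    Multiset Q → Multiset Q → Prop where
  | internal (C : Multiset Q) (q q' : Q)
      (ht : (q, RVAct.tau, q') ∈ T) (hq : 0 < C.count q) :
      NBStep T C (C - {q} + {q'})
  | rdv (C : Multiset Q) (m : A) (q1 q1' q2 q2' : Q)
      (ht1 : (q1, RVAct.send m, q1') ∈ T) (ht2 : (q2, RVAct.recv m, q2') ∈ T)
      (h1 : 0 < C.count q1) (h2 : 0 < C.count q2)
      (h12 : 2 ≤ C.count q1 + C.count q2) :
      NBStep T C (C - {q1, q2} + {q1', q2'})
  | nb (C : Multiset Q) (m : A) (q1 q1' : Q)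
      (ht : (q1, RVAct.send m, q1') ∈ T) (h1 : 0 < C.count q1)
      (hno : ∀ q2 q2', (q2, RVAct.recv m, q2') ∈ T → (C - {q1}).count q2 = 0) :
      NBStep T C (C - {q1} + {q1'})

/-- monotonicity of the non-blocking rendez-vous semantics. -/
theorem nbStep_monotone {Q A : Type} [DecidableEq Q]
    (T : Set (Q × RVAct A × Q)) (C C' : Multiset Q)
    (h : NBStep T C C') :
    ∀ D : Multiset Q, C ≤ D → ∃ D' : Multiset Q, NBStep T D D' ∧ C' ≤ D' := by
  intro D hCD
  induction h with
  | internal q q' ht hq =>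
      refine ⟨D - {q} + {q'}, NBStep.internal D q q' ht ?_, ?_⟩
      · exact lt_of_lt_of_le hq (Multiset.count_le_of_le q hCD)
      · exact add_le_add (tsub_le_tsub_right hCD _) le_rfl
  | rdv m q1 q1' q2 q2' ht1 ht2 h1 h2 h12 =>
      refine ⟨D - {q1, q2} + {q1', q2'},
        NBStep.rdv D m q1 q1' q2 q2' ht1 ht2 ?_ ?_ ?_, ?_⟩
      · exact lt_of_lt_of_le h1 (Multiset.count_le_of_le q1 hCD)
      · exact lt_of_lt_of_le h2 (Multiset.count_le_of_le q2 hCD)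
      · exact le_trans h12 (add_le_add (Multiset.count_le_of_le q1 hCD)
          (Multiset.count_le_of_le q2 hCD))
      · exact add_le_add (tsub_le_tsub_right hCD _) le_rfl
  | nb m q1 q1' ht h1 hno =>
      by_cases hr : ∃ q2 q2', (q2, RVAct.recv m, q2') ∈ T ∧ 0 < (D - {q1}).count q2
      · obtain ⟨q2, q2', hmem, hq2⟩ := hr
        have hq2D : 0 < D.count q2 :=
          lt_of_lt_of_le hq2 (Multiset.count_le_of_le q2 (tsub_le_self))
        have hq1D : 0 < D.count q1 := lt_of_lt_of_le h1 (Multiset.count_le_of_le q1 hCD)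
        have hsum : 2 ≤ D.count q1 + D.count q2 := by
          have hq2' := hq2
          rw [Multiset.count_sub, Multiset.count_singleton] at hq2'
          split_ifs at hq2' <;> omega
        refine ⟨D - {q1, q2} + {q1', q2'},
          NBStep.rdv D m q1 q1' q2 q2' ht hmem hq1D hq2D hsum, ?_⟩
        have hstep1 : C - {q1} ≤ D - {q1, q2} := by
          rw [Multiset.le_iff_count]
          intro a
          by_cases ha : a = q2
          · rw [ha, hno q2 q2' hmem]
            exact Nat.zero_le _
          · have h' : (C - {q1}).count a ≤ (D - {q1}).count a :=
              Multiset.count_le_of_le a (tsub_le_tsub_right hCD _)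
            simp only [Multiset.count_sub] at h' ⊢
            have : ({q1, q2} : Multiset Q).count a = ({q1} : Multiset Q).count a := by
              simp [Multiset.insert_eq_cons, Multiset.count_cons,
                Multiset.count_singleton, ha]
            rw [this]
            exact h'
        have hstep2 : ({q1'} : Multiset Q) ≤ {q1', q2'} := by
          rw [Multiset.insert_eq_cons]
          exact Multiset.cons_le_cons q1' (Multiset.zero_le _)
        exact add_le_add hstep1 hstep2
      · push_neg at hr
        refine ⟨D - {q1} + {q1'}, NBStep.nb D m q1 q1' ht
          (lt_of_lt_of_le h1 (Multiset.count_le_of_le q1 hCD)) ?_, ?_⟩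
        · intro q2 q2' hmem
          exact Nat.eq_zero_of_not_pos (by simpa using hr q2 q2' hmem)
        · exact add_le_add (tsub_le_tsub_right hCD _) le_rfl
end

section
/- (Monotonicity, iterated) Let P be a rendez-vous protocol. If C = C_0 → C_1 → ... → C_ℓ = C' is an execution of the non-blocking semantics and D_0 ≥ C_0, then there exist configurations D_1, ..., D_ℓ with D_0 → D_1 → ... → D_ℓ and D_i ≥ C_i for all 1 ≤ i ≤ ℓ. -/
/-! Every step from `C` can be replayed from any `D ≥ C` by the same transition, except a
non-blocking request that `D` blocks because `D` holds an extra receiver; a rendez-vous with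
that receiver then covers the step, since the receiver's process is surplus over `C`. Iterating
this one-step simulation along the execution gives the covering execution. -/

theorem exists_seq_of_simulation {α β : Type*} {r : α → α → Prop} {r' : β → β → Prop}
    {s : α → β → Prop} (hsim : ∀ a a' b, r a a' → s a b → ∃ b', r' b b' ∧ s a' b')
    (ℓ : ℕ) (as : ℕ → α) (has : ∀ i, i < ℓ → r (as i) (as (i + 1))) (b₀ : β)
    (h₀ : s (as 0) b₀) :
    ∃ bs : ℕ → β, bs 0 = b₀ ∧ (∀ i, i < ℓ → r' (bs i) (bs (i + 1))) ∧
      ∀ i, i ≤ ℓ → s (as i) (bs i) := by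
  have : Nonempty β := ⟨b₀⟩
  choose! next hnext using hsim
  let bs : ℕ → β := fun i => Nat.rec b₀ (fun j b => next (as j) (as (j + 1)) b) i
  have hbs : ∀ i, i ≤ ℓ → s (as i) (bs i) := by
    intro i
    induction i with
    | zero => exact fun _ => h₀
    | succ i ih => exact fun hi => (hnext _ _ _ (has i hi) (ih (Nat.le_of_succ_le hi))).2
  exact ⟨bs, rfl, fun i hi => (hnext _ _ _ (has i hi) (hbs i hi.le)).1, hbs⟩

namespace Multiset

variable {α : Type*} [DecidableEq α]

theorem le_sub_singleton_of_count_eq_zero {s t : Multiset α} {a : α} (hst : s ≤ t)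
    (ha : s.count a = 0) : s ≤ t - {a} := by
  rw [le_iff_count]
  intro x
  rw [count_sub, count_singleton]
  split_ifs with hx
  · subst hx; omega
  · simpa using count_le_of_le x hst

theorem two_le_count_add_count {s : Multiset α} {a b : α} (ha : 0 < s.count a)
    (hb : 0 < (s - {a}).count b) : 2 ≤ s.count a + s.count b := by
  rw [count_sub, count_singleton] at hb
  split_ifs at hb with hba
  · subst hba; omega
  · omega

end Multiset

namespace NBStep

variable {Q A : Type} [DecidableEq Q] {T : Set (Q × RVAct A × Q)}

theorem exists_rdv_covering_nb {C D : Multiset Q} {m : A} {q1 q1' q2 q2' : Q}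
    (ht1 : (q1, RVAct.send m, q1') ∈ T) (ht2 : (q2, RVAct.recv m, q2') ∈ T)
    (hC : 0 < C.count q1) (hCq2 : (C - {q1}).count q2 = 0) (hCD : C ≤ D)
    (hDq2 : 0 < (D - {q1}).count q2) :
    ∃ D', NBStep T D D' ∧ C - {q1} + {q1'} ≤ D' := by
  have hD : 0 < D.count q1 := hC.trans_le (Multiset.count_le_of_le q1 hCD)
  refine ⟨_, .rdv D m q1 q1' q2 q2' ht1 ht2 hD
    (hDq2.trans_le (Multiset.count_le_of_le q2 tsub_le_self))
    (Multiset.two_le_count_add_count hD hDq2), ?_⟩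
  have hpair : ∀ a b : Q, ({a, b} : Multiset Q) = {a} + {b} := fun a b => rfl
  rw [hpair, hpair, ← tsub_tsub]
  exact add_le_add (Multiset.le_sub_singleton_of_count_eq_zero
    (tsub_le_tsub_right hCD _) hCq2) (Multiset.le_add_right _ _)

theorem exists_le_of_le {C C' D : Multiset Q} (h : NBStep T C C') (hCD : C ≤ D) :
    ∃ D', NBStep T D D' ∧ C' ≤ D' := by
  have hcount : ∀ q, 0 < C.count q → 0 < D.count q :=
    fun q hq => hq.trans_le (Multiset.count_le_of_le q hCD)
  have hmono : ∀ s t : Multiset Q, C - s + t ≤ D - s + t :=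
    fun s t => add_le_add_left (tsub_le_tsub_right hCD s) t
  cases h with
  | internal q q' ht hq => exact ⟨_, .internal D q q' ht (hcount q hq), hmono _ _⟩
  | rdv m q1 q1' q2 q2' ht1 ht2 h1 h2 h12 =>
    refine ⟨_, .rdv D m q1 q1' q2 q2' ht1 ht2 (hcount q1 h1) (hcount q2 h2) ?_, hmono _ _⟩
    exact h12.trans
      (add_le_add (Multiset.count_le_of_le q1 hCD) (Multiset.count_le_of_le q2 hCD))
  | nb m q1 q1' ht h1 hno =>
    by_cases hrecv : ∃ q2 q2', (q2, RVAct.recv m, q2') ∈ T ∧ 0 < (D - {q1}).count q2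
    · obtain ⟨q2, q2', ht2, hDq2⟩ := hrecv
      exact exists_rdv_covering_nb ht ht2 h1 (hno q2 q2' ht2) hCD hDq2
    · push Not at hrecv
      exact ⟨_, .nb D m q1 q1' ht (hcount q1 h1)
        (fun q2 q2' ht2 => Nat.le_zero.mp (hrecv q2 q2' ht2)), hmono _ _⟩

end NBStep

/-- iterated monotonicity of the non-blocking semantics. -/
theorem nbStep_monotone_iterated {Q A : Type} [DecidableEq Q]
    (T : Set (Q × RVAct A × Q)) (ℓ : ℕ) (Cs : ℕ → Multiset Q)
    (hsteps : ∀ i, i < ℓ → NBStep T (Cs i) (Cs (i + 1)))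
    (D0 : Multiset Q) (hD0 : Cs 0 ≤ D0) :
    ∃ Ds : ℕ → Multiset Q, Ds 0 = D0 ∧
      (∀ i, i < ℓ → NBStep T (Ds i) (Ds (i + 1))) ∧
      (∀ i, i ≤ ℓ → Cs i ≤ Ds i) :=
  exists_seq_of_simulation (fun _ _ _ => NBStep.exists_le_of_le) ℓ Cs hsteps D0 hD0
end

section
/- (Rackoff-style recurrence for NB-VAS) Let V = (T, v_init) be an NB-VAS of dimension d with target v_f, and let N = |v_f| + max over (t_b,t_nb) ∈ T of (|t_b| + |t_nb|) where |·| is the 1-norm. Define f(i) as the supremum over subsets J ⊆ [1,d] of size i and vectors v ∈ ℕ^d admitting a J-covering path, of the length of the shortest J-covering relaxed path from v. Then for all 0 ≤ i < d, f(i+1) ≤ (N · f(i))^{i+1} + f(i). -/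
/-- Relaxed step of an NB-VAS transition `t = (t_b, t_nb)`. -/
def NBVAS.RelaxedStep {d : ℕ} (t : (Fin d → ℤ) × (Fin d → ℕ))
    (v v' : Fin d → ℕ) : Prop :=
  ∀ i, (v' i : ℤ) = max 0 ((v i : ℤ) + t.1 i - (t.2 i : ℤ))

/-- A `J`-covering relaxed path of `n` vectors starting at `v`
(with target `vf`). -/
def NBVAS.CovPath {d : ℕ} (T : Set ((Fin d → ℤ) × (Fin d → ℕ)))
    (vf : Fin d → ℕ) (J : Finset (Fin d)) (v : Fin d → ℕ) (n : ℕ) : Prop :=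
  1 ≤ n ∧ ∃ vs : ℕ → Fin d → ℕ, vs 0 = v ∧
    (∀ i, i + 1 < n → ∃ t ∈ T, NBVAS.RelaxedStep t (vs i) (vs (i + 1)) ∧
      ∀ j ∈ J, 0 ≤ (vs i j : ℤ) + t.1 j) ∧
    (∀ j ∈ J, vf j ≤ vs (n - 1) j)

/-!
Take a shortest `J`-covering path, `|J| = i + 1`. Its `J`-projections are pairwise distinct,
since a repetition could be cut out: the future of a relaxed path depends only on the
`J`-coordinates as far as `J`-correctness and `J`-covering are concerned. So as long as all
`J`-coordinates stay below `N·f(i)`, the path visits at most `(N·f(i))^(i+1)` positions. If some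
coordinate `j` reaches `N·f(i)`, replace the rest of the path by a shortest
`(J \ {j})`-covering one, of length at most `f(i)`: each step lowers coordinate `j` by at most
`N - |v_f|`, so along it coordinate `j` stays nonnegative and ends above `v_f(j)`.
-/

namespace NBVAS

variable {d : ℕ}

def step (t : (Fin d → ℤ) × (Fin d → ℕ)) (v : Fin d → ℕ) : Fin d → ℕ :=
  fun j => ((v j : ℤ) + t.1 j - t.2 j).toNat

lemma relaxedStep_step (t : (Fin d → ℤ) × (Fin d → ℕ)) (v : Fin d → ℕ) :
    RelaxedStep t v (step t v) := fun j => by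
  simp only [step]
  omega

namespace RelaxedStep

variable {t : (Fin d → ℤ) × (Fin d → ℕ)} {v v' w w' : Fin d → ℕ}

lemma apply_eq_of_apply_eq (h : RelaxedStep t v v') (h' : RelaxedStep t w w') {j : Fin d}
    (hj : v j = w j) : v' j = w' j := by
  have := h j
  have := h' j
  omega

lemma le_add (h : RelaxedStep t v v') (j : Fin d) :
    v j ≤ v' j + ((t.1 j).natAbs + t.2 j) := by
  have := h j
  omega

end RelaxedStep

def CorrectStep (T : Set ((Fin d → ℤ) × (Fin d → ℕ))) (J : Finset (Fin d))
    (v v' : Fin d → ℕ) : Prop :=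
  ∃ t ∈ T, RelaxedStep t v v' ∧ ∀ j ∈ J, 0 ≤ (v j : ℤ) + t.1 j

def IsCorrectRun (T : Set ((Fin d → ℤ) × (Fin d → ℕ))) (J : Finset (Fin d))
    (vs : ℕ → Fin d → ℕ) (n : ℕ) : Prop :=
  ∀ i, i + 1 < n → CorrectStep T J (vs i) (vs (i + 1))

variable {T : Set ((Fin d → ℤ) × (Fin d → ℕ))} {vf : Fin d → ℕ} {J J' : Finset (Fin d)}
  {v v' w : Fin d → ℕ} {vs : ℕ → Fin d → ℕ} {n m k : ℕ}

lemma CorrectStep.mono (h : CorrectStep T J v v') (hJ : J' ⊆ J) : CorrectStep T J' v v' :=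
  let ⟨t, ht, hstep, hcorr⟩ := h
  ⟨t, ht, hstep, fun j hj => hcorr j (hJ hj)⟩

lemma CorrectStep.exists_congr (h : CorrectStep T J v v') (hvw : ∀ j ∈ J, v j = w j) :
    ∃ w', CorrectStep T J w w' ∧ ∀ j ∈ J, v' j = w' j := by
  obtain ⟨t, ht, hstep, hcorr⟩ := h
  refine ⟨step t w, ⟨t, ht, relaxedStep_step t w, fun j hj => ?_⟩, fun j hj => ?_⟩
  · rw [← hvw j hj]
    exact hcorr j hj
  · exact hstep.apply_eq_of_apply_eq (relaxedStep_step t w) (hvw j hj)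

lemma covPath_one_iff : CovPath T vf J v 1 ↔ ∀ j ∈ J, vf j ≤ v j :=
  ⟨fun ⟨_, vs, h0, _, hcov⟩ => h0 ▸ hcov, fun h => ⟨le_rfl, fun _ => v, rfl, by simp, h⟩⟩

lemma CovPath.cons (hstep : CorrectStep T J v v') (h : CovPath T vf J v' n) :
    CovPath T vf J v (n + 1) := by
  obtain ⟨hn, vs, rfl, hrun, hcov⟩ := h
  refine ⟨by omega, fun | 0 => v | i + 1 => vs i, rfl, fun i hi => ?_, ?_⟩
  · cases i with
    | zero => exact hstep
    | succ i => exact hrun i (by omega)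
  · obtain ⟨n, rfl⟩ := Nat.exists_eq_add_of_le' hn
    exact hcov

lemma covPath_succ_succ_iff :
    CovPath T vf J v (n + 2) ↔ ∃ v', CorrectStep T J v v' ∧ CovPath T vf J v' (n + 1) := by
  refine ⟨fun ⟨_, vs, h0, hrun, hcov⟩ => ?_, fun ⟨v', hstep, h⟩ => h.cons hstep⟩
  exact ⟨vs 1, h0 ▸ hrun 0 (by omega), by omega, fun i => vs (i + 1), rfl,
    fun i hi => hrun (i + 1) (by omega), hcov⟩

lemma CovPath.induction {P : (Fin d → ℕ) → ℕ → Prop}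
    (one : ∀ v, (∀ j ∈ J, vf j ≤ v j) → P v 1)
    (cons : ∀ v v' n, CorrectStep T J v v' → CovPath T vf J v' (n + 1) → P v' (n + 1) →
      P v (n + 2))
    (h : CovPath T vf J v n) : P v n := by
  obtain ⟨n, rfl⟩ := Nat.exists_eq_add_of_le' h.1
  induction n generalizing v with
  | zero => exact one v (covPath_one_iff.mp h)
  | succ n ih =>
    obtain ⟨v', hstep, h'⟩ := covPath_succ_succ_iff.mp h
    exact cons v v' n hstep h' (ih h')

lemma CovPath.mono (h : CovPath T vf J v n) (hJ : J' ⊆ J) : CovPath T vf J' v n :=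
  let ⟨hn, vs, h0, hrun, hcov⟩ := h
  ⟨hn, vs, h0, fun i hi => CorrectStep.mono (hrun i hi) hJ, fun j hj => hcov j (hJ hj)⟩

lemma CovPath.congr (h : CovPath T vf J v n) (hvw : ∀ j ∈ J, v j = w j) :
    CovPath T vf J w n := by
  refine h.induction (P := fun v n => ∀ w, (∀ j ∈ J, v j = w j) → CovPath T vf J w n)
    ?_ ?_ w hvw
  · exact fun v hcov w hvw => covPath_one_iff.mpr fun j hj => hvw j hj ▸ hcov j hj
  · intro v v' n hstep _ ih w hvw
    obtain ⟨w', hstep', hvw'⟩ := hstep.exists_congr hvw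
    exact (ih w' hvw').cons hstep'

/-- Coordinate `j` drops by at most `C` per step. -/
lemma CovPath.insert_of_le {C : ℕ} {j : Fin d}
    (hC : ∀ t ∈ T, ∀ j, (t.1 j).natAbs + t.2 j ≤ C)
    (h : CovPath T vf J v n) (hv : vf j + C * n ≤ v j) : CovPath T vf (insert j J) v n := by
  refine h.induction (P := fun v n => vf j + C * n ≤ v j → CovPath T vf (insert j J) v n)
    ?_ ?_ hv
  · intro v hcov hv
    refine covPath_one_iff.mpr fun i hi => ?_
    rcases Finset.mem_insert.mp hi with rfl | hi
    · exact le_trans (by omega) hv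
    · exact hcov i hi
  · intro v v' n hstep _ ih hv
    obtain ⟨t, ht, hrel, hcorr⟩ := hstep
    have hdrop := hrel.le_add j
    have hCj := hC t ht j
    refine CovPath.cons ⟨t, ht, hrel, fun i hi => ?_⟩ (ih ?_)
    · rcases Finset.mem_insert.mp hi with rfl | hi
      · have : C ≤ v i := le_trans (by nlinarith) hv
        omega
      · exact hcorr i hi
    · rw [show n + 2 = (n + 1) + 1 by rfl, Nat.mul_succ] at hv
      omega

lemma covPath_drop (hrun : IsCorrectRun T J vs n) (hcov : ∀ j ∈ J, vf j ≤ vs (n - 1) j)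
    (hm : m < n) : CovPath T vf J (vs m) (n - m) :=
  ⟨by omega, fun r => vs (m + r), rfl, fun r hr => hrun (m + r) (by omega),
    by beta_reduce; rwa [show m + (n - m - 1) = n - 1 by omega]⟩

lemma CovPath.append (hrun : IsCorrectRun T J vs (k + 1)) (h : CovPath T vf J (vs k) m) :
    CovPath T vf J (vs 0) (k + m) := by
  induction k generalizing vs with
  | zero => simpa using h
  | succ k ih =>
    have := ih (vs := fun i => vs (i + 1)) (fun i hi => hrun (i + 1) (by omega)) h
    rw [show k + 1 + m = k + m + 1 by omega]
    exact this.cons (hrun 0 (by omega))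

lemma injOn_of_forall_not_covPath_lt (hrun : IsCorrectRun T J vs n)
    (hcov : ∀ j ∈ J, vf j ≤ vs (n - 1) j) (hmin : ∀ m < n, ¬ CovPath T vf J (vs 0) m) :
    Set.InjOn (fun k (j : J) => vs k j) (Set.Iio n) := by
  suffices key : ∀ k l, k < l → l < n → ¬ ∀ j ∈ J, vs k j = vs l j by
    intro k hk l hl hkl
    have hkl' : ∀ j ∈ J, vs k j = vs l j := fun j hj => congrFun hkl ⟨j, hj⟩
    by_contra hne
    rcases Nat.lt_or_gt_of_ne hne with h | h
    · exact key k l h hl hkl'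
    · exact key l k h hk fun j hj => (hkl' j hj).symm
  intro k l hkl hln heq
  have hshort := ((covPath_drop hrun hcov hln).congr fun j hj => (heq j hj).symm).append
    (k := k) (vs := vs) fun i hi => hrun i (by omega)
  exact hmin _ (by omega) hshort

lemma card_le_pow_of_injOn {ι : Type*} {J : Finset ι} {M n : ℕ} {g : ℕ → ι → ℕ}
    (hM : ∀ k < n, ∀ j ∈ J, g k j < M)
    (hinj : Set.InjOn (fun k (j : J) => g k j) (Set.Iio n)) : n ≤ M ^ J.card := by
  classical
  have := Finset.card_le_card_of_injOn (s := Finset.range n)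
    (t := Fintype.piFinset fun _ : J => Finset.range M) (fun k (j : J) => g k j)
    (fun k hk => Fintype.mem_piFinset.mpr fun j =>
      Finset.mem_range.mpr (hM k (Finset.mem_range.mp hk) j j.2))
    (by simpa using hinj)
  simpa using this

lemma CovPath.exists_le_of_large {C F : ℕ} {j : Fin d}
    (hC : ∀ t ∈ T, ∀ j, (t.1 j).natAbs + t.2 j ≤ C)
    (hF : (∃ n, CovPath T vf (J.erase j) v n) → ∃ n, CovPath T vf (J.erase j) v n ∧ n ≤ F)
    (h : CovPath T vf J v n) (hj : j ∈ J) (hv : (vf j + C) * F ≤ v j) :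
    ∃ n', CovPath T vf J v n' ∧ n' ≤ F := by
  obtain ⟨n', h', hn'F⟩ := hF ⟨n, h.mono (Finset.erase_subset j J)⟩
  have hbound : vf j + C * n' ≤ v j := by nlinarith [h'.1]
  exact ⟨n', Finset.insert_erase hj ▸ h'.insert_of_le hC hbound, hn'F⟩

end NBVAS

open NBVAS in
theorem rackoff_recurrence_general
    {d : ℕ} (T : Finset ((Fin d → ℤ) × (Fin d → ℕ))) (vf : Fin d → ℕ)
    (N : ℕ)
    (hN : N = (∑ j, vf j) +
      T.sup (fun t => (∑ j, (t.1 j).natAbs) + ∑ j, t.2 j))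
    (f : ℕ → ℕ) (i : ℕ)
    (hf : ∀ (J : Finset (Fin d)) (v : Fin d → ℕ), J.card = i →
      (∃ n, NBVAS.CovPath (↑T) vf J v n) →
      ∃ n, NBVAS.CovPath (↑T) vf J v n ∧ n ≤ f i) :
    ∀ (J : Finset (Fin d)) (v : Fin d → ℕ), J.card = i + 1 →
      (∃ n, NBVAS.CovPath (↑T) vf J v n) →
      ∃ n, NBVAS.CovPath (↑T) vf J v n ∧ n ≤ (N * f i) ^ (i + 1) + f i := by
  classical
  intro J v hJ hex
  set C := T.sup fun t => (∑ j, (t.1 j).natAbs) + ∑ j, t.2 j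
  have hC : ∀ t ∈ T, ∀ j, (t.1 j).natAbs + t.2 j ≤ C := fun t ht j =>
    le_trans (add_le_add
      (Finset.single_le_sum (f := fun j => (t.1 j).natAbs) (by simp) (Finset.mem_univ j))
      (Finset.single_le_sum (f := t.2) (by simp) (Finset.mem_univ j)))
      (Finset.le_sup (f := fun t => (∑ j, (t.1 j).natAbs) + ∑ j, t.2 j) ht)
  have hvfC : ∀ j, vf j + C ≤ N := fun j => hN ▸ Nat.add_le_add_right
    (Finset.single_le_sum (fun _ _ => Nat.zero_le _) (Finset.mem_univ j)) C
  obtain ⟨-, vs, rfl, hrun, hcov⟩ := Nat.find_spec hex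
  have hinj := injOn_of_forall_not_covPath_lt hrun hcov fun m hm => Nat.find_min hex hm
  by_cases hlarge : ∃ m < Nat.find hex, ∃ j ∈ J, N * f i ≤ vs m j
  · obtain ⟨hm, j, hj, hjm⟩ := Nat.find_spec hlarge
    have hpre : Nat.find hlarge ≤ (N * f i) ^ (i + 1) := hJ ▸ card_le_pow_of_injOn
      (fun k hk j hj => not_le.mp fun h => Nat.find_min hlarge hk ⟨by omega, j, hj, h⟩)
      (hinj.mono (Set.Iio_subset_Iio hm.le))
    obtain ⟨n', hpath, hn'⟩ := (covPath_drop hrun hcov hm).exists_le_of_large hC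
      (hf _ _ (by rw [Finset.card_erase_of_mem hj, hJ]; rfl)) hj
      (le_trans (Nat.mul_le_mul_right _ (hvfC j)) hjm)
    exact ⟨_, hpath.append fun k hk => hrun k (by omega), by omega⟩
  · push Not at hlarge
    exact ⟨_, Nat.find_spec hex, hJ ▸ (card_le_pow_of_injOn hlarge hinj).trans (by omega)⟩

/-- the Rackoff-style recurrence
`f(i+1) ≤ (N·f(i))^(i+1) + f(i)` for shortest covering paths in an NB-VAS. -/
theorem rackoff_recurrence
    {d : ℕ} (T : Finset ((Fin d → ℤ) × (Fin d → ℕ))) (vf : Fin d → ℕ)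
    (N : ℕ)
    (hN : N = (∑ j, vf j) +
      T.sup (fun t => (∑ j, (t.1 j).natAbs) + ∑ j, t.2 j))
    (f : ℕ → ℕ) (i : ℕ) (hid : i < d)
    (hf : ∀ (J : Finset (Fin d)) (v : Fin d → ℕ), J.card = i →
      (∃ n, NBVAS.CovPath (↑T) vf J v n) →
      ∃ n, NBVAS.CovPath (↑T) vf J v n ∧ n ≤ f i) :
    ∀ (J : Finset (Fin d)) (v : Fin d → ℕ), J.card = i + 1 →
      (∃ n, NBVAS.CovPath (↑T) vf J v n) →
      ∃ n, NBVAS.CovPath (↑T) vf J v n ∧ n ≤ (N * f i) ^ (i + 1) + f i :=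
  rackoff_recurrence_general T vf N hN f i hf
end

section
/- (Growth of the abstraction operator F) Let P be a wait-only protocol and γ = (S, Toks) a consistent abstract set of configurations, and let (S', Toks') = F(γ) as defined via the intermediate sets (S'', Toks'') of Tables 1 and 2. Then S ⊆ S', and moreover either S ⊊ S' or Toks ⊆ Toks'. -/
/-- Messages receivable in state `q`. -/
def RecSet {Q A : Type} (T : Set (Q × RVAct A × Q)) (q : Q) : Set A :=
  {m | ∃ q', (q, RVAct.recv m, q') ∈ T}

/-- States appearing in a set of tokens. -/
def stToks {Q A : Type} (Toks : Set (Q × A)) : Set Q :=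
  {q | ∃ m : A, (q, m) ∈ Toks}

/-- Two states are conflict-free in the abstract set `(S, Toks)`. -/
def ConflictFree {Q A : Type} (T : Set (Q × RVAct A × Q))
    (Toks : Set (Q × A)) (q1 q2 : Q) : Prop :=
  ∃ m1 m2 : A, m1 ≠ m2 ∧ (q1, m1) ∈ Toks ∧ (q2, m2) ∈ Toks ∧
    m1 ∉ RecSet T q2 ∧ m2 ∉ RecSet T q1

/-- A configuration respects the abstract set of configurations `(S, Toks)`. -/
def Respects {Q A : Type} [DecidableEq Q] (T : Set (Q × RVAct A × Q))
    (S : Set Q) (Toks : Set (Q × A)) (C : Multiset Q) : Prop :=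
  ∀ q, 0 < C.count q →
    q ∈ S ∨ (q ∈ stToks Toks ∧ C.count q = 1 ∧
      ∀ q', q' ∈ stToks Toks → q' ≠ q → C.count q' = 1 → ConflictFree T Toks q q')

/-- The protocol is wait-only with waiting states `QW`: waiting states only
receive, non-waiting (active) states only send or do internal actions, and
the initial state is active. -/
def WaitOnly {Q A : Type} (T : Set (Q × RVAct A × Q)) (QW : Set Q)
    (qin : Q) : Prop :=
  qin ∉ QW ∧
  (∀ q m (q' : Q), (q, RVAct.recv m, q') ∈ T → q ∈ QW) ∧
  (∀ q m (q' : Q), (q, RVAct.send m, q') ∈ T → q ∉ QW) ∧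
  (∀ q q' : Q, (q, RVAct.tau, q') ∈ T → q ∉ QW)

/-- Consistency of the abstract set `(S, Toks)`: (i) every token is generated
by a feasible path whose first action is the request `!m` from `S` and whose
receptions are all answerable from `S`; (ii) reception symmetry of tokens. -/
def Consistent {Q A : Type} (T : Set (Q × RVAct A × Q))
    (S : Set Q) (Toks : Set (Q × A)) : Prop :=
  (∀ q m, (q, m) ∈ Toks → ∃ (k : ℕ) (qs : ℕ → Q) (ms : ℕ → A),
      qs 0 ∈ S ∧ (qs 0, RVAct.send m, qs 1) ∈ T ∧ qs (k + 1) = q ∧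
      ∀ i, 1 ≤ i → i ≤ k →
        (qs i, RVAct.recv (ms i), qs (i + 1)) ∈ T ∧
        ∃ p p', p ∈ S ∧ (p, RVAct.send (ms i), p') ∈ T) ∧
  (∀ q m q' m', (q, m) ∈ Toks → (q', m') ∈ Toks →
      (m ∈ RecSet T q' ∧ m' ∈ RecSet T q) ∨
      (m ∉ RecSet T q' ∧ m' ∉ RecSet T q))

/-- The message `a` can be sent from some state of `S`. -/
def SendableFrom {Q A : Type} (T : Set (Q × RVAct A × Q)) (S : Set Q)
    (a : A) : Prop :=
  ∃ p p' : Q, p ∈ S ∧ (p, RVAct.send a, p') ∈ T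

/-- Intermediate set `S''` of Table 1. -/
def interS {Q A : Type} (T : Set (Q × RVAct A × Q)) (S : Set Q)
    (Toks : Set (Q × A)) : Set Q :=
  S ∪
  {p' | ∃ p, p ∈ S ∧ (p, RVAct.tau, p') ∈ T} ∪
  {p' | ∃ p a, p ∈ S ∧ (p, RVAct.send a, p') ∈ T ∧
    (a ∉ RecSet T p' ∨ ∃ q q' : Q, q ∈ S ∧ (q, RVAct.recv a, q') ∈ T)} ∪
  {q' | ∃ q a, (q ∈ S ∨ (q, a) ∈ Toks) ∧ (q, RVAct.recv a, q') ∈ T ∧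
    SendableFrom T S a} ∪
  {q' | ∃ q a m, (q, m) ∈ Toks ∧ m ≠ a ∧ (q, RVAct.recv a, q') ∈ T ∧
    SendableFrom T S a ∧ m ∉ RecSet T q'}

/-- Intermediate set `Toks''` of Table 1. -/
def interToks {Q A : Type} (T : Set (Q × RVAct A × Q)) (S : Set Q)
    (Toks : Set (Q × A)) : Set (Q × A) :=
  Toks ∪
  {pa | ∃ p, p ∈ S ∧ (p, RVAct.send pa.2, pa.1) ∈ T ∧
    pa.2 ∈ RecSet T pa.1 ∧ ∀ q q' : Q, (q, RVAct.recv pa.2, q') ∈ T → q ∉ S} ∪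
  {qm | ∃ q a, (q, qm.2) ∈ Toks ∧ qm.2 ≠ a ∧ (q, RVAct.recv a, qm.1) ∈ T ∧
    SendableFrom T S a ∧ qm.2 ∈ RecSet T qm.1}

/-- The set `S'` of Table 2 (rules 6–8 applied to `Toks''`). -/
def FS {Q A : Type} (T : Set (Q × RVAct A × Q)) (S : Set Q)
    (Toks : Set (Q × A)) : Set Q :=
  interS T S Toks ∪
  {q1 | ∃ m1 q2 m2, (q1, m1) ∈ interToks T S Toks ∧
    (q2, m2) ∈ interToks T S Toks ∧ m1 ≠ m2 ∧
    m2 ∉ RecSet T q1 ∧ m1 ∈ RecSet T q2} ∪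
  {q1 | ∃ m1 q2 m2 q3, (q1, m1) ∈ interToks T S Toks ∧
    (q2, m2) ∈ interToks T S Toks ∧ (q3, m2) ∈ interToks T S Toks ∧
    m1 ≠ m2 ∧ (q2, RVAct.recv m1, q3) ∈ T} ∪
  {q1 | ∃ m1 q2 m2 q3 m3, (q1, m1) ∈ interToks T S Toks ∧
    (q2, m2) ∈ interToks T S Toks ∧ (q3, m3) ∈ interToks T S Toks ∧
    m1 ≠ m2 ∧ m1 ≠ m3 ∧ m2 ≠ m3 ∧
    m1 ∉ RecSet T q2 ∧ m1 ∈ RecSet T q3 ∧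
    m2 ∉ RecSet T q1 ∧ m2 ∈ RecSet T q3 ∧
    m3 ∈ RecSet T q2 ∧ m3 ∈ RecSet T q1}

/-- The token component `Toks'` of `F(γ)`. -/
def FToks {Q A : Type} (T : Set (Q × RVAct A × Q)) (S : Set Q)
    (Toks : Set (Q × A)) : Set (Q × A) :=
  {qm ∈ interToks T S Toks | qm.1 ∉ FS T S Toks}

/-- growth of the abstraction operator `F`:
`S ⊆ S'`, and either `S ⊊ S'` or `Toks ⊆ Toks'`. -/
theorem F_growth {Q A : Type} [DecidableEq Q]
    (T : Set (Q × RVAct A × Q)) (QW : Set Q) (qin : Q)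
    (hwo : WaitOnly T QW qin)
    (S : Set Q) (Toks : Set (Q × A))
    (habs : ∀ p ∈ Toks, p.1 ∈ QW ∧ p.1 ∉ S)
    (hcons : Consistent T S Toks) :
    S ⊆ FS T S Toks ∧
    (S ⊂ FS T S Toks ∨ Toks ⊆ FToks T S Toks) := by
  have hsub : S ⊆ FS T S Toks := fun q hq =>
    Or.inl (Or.inl (Or.inl (Or.inl (Or.inl (Or.inl (Or.inl hq))))))
  refine ⟨hsub, ?_⟩
  by_cases heq : S = FS T S Toks
  · right
    intro qm hqm
    refine ⟨Or.inl (Or.inl hqm), ?_⟩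
    rw [← heq]
    exact (habs qm hqm).2
  · left
    exact ⟨hsub, fun h => heq (le_antisymm hsub h)⟩
end

section
/- (Characterization of coverability via the abstract fixed point) Let P be a wait-only protocol, γ_f the fixed point of the iteration γ_{i+1} = F(γ_i) from γ_0 = ({q_in}, ∅), and C any configuration. Then there exist an initial configuration C_0 and a configuration C' ≥ C with C_0 →* C' in the non-blocking semantics if and only if there exists C'' ∈ ⟦γ_f⟧ with C'' ≥ C (equivalently, by downward closure, iff C ∈ ⟦γ_f⟧). -/
/-- characterization of coverability via the abstract fixed
point `γ_f`. -/
theorem coverability_iff_fixed_point {Q A Γ : Type}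
    [DecidableEq Q] [Fintype Q] [Fintype A]
    (T : Set (Q × RVAct A × Q)) (qin : Q)
    (Interp : Γ → Set (Multiset Q)) (F : Γ → Γ) (Cons : Γ → Prop) (γ0 : Γ)
    (hsound : ∀ γ, Cons γ → ∀ C C' : Multiset Q,
      C ∈ Interp γ → NBStep T C C' → C' ∈ Interp (F γ))
    (hcomp : ∀ γ, Cons γ → ∀ C' : Multiset Q, C' ∈ Interp (F γ) →
      ∃ C'' C : Multiset Q, C' ≤ C'' ∧ C ∈ Interp γ ∧
        Relation.ReflTransGen (NBStep T) C C'')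
    (hgrow : ∀ γ, Interp γ ⊆ Interp (F γ))
    (hmono : ∀ C C' D : Multiset Q, NBStep T C C' → C ≤ D →
      ∃ D' : Multiset Q, NBStep T D D' ∧ C' ≤ D')
    (hinit : Interp γ0 = {C : Multiset Q | ∀ q, q ≠ qin → C.count q = 0})
    (hconsi : ∀ i : ℕ, Cons (F^[i] γ0))
    (γf : Γ)
    (hγf : γf = F^[Fintype.card Q ^ 2 * Fintype.card A] γ0)
    (hfix : F γf = γf)
    (hdc : ∀ γ (C C' : Multiset Q), C' ∈ Interp γ → C ≤ C' → C ∈ Interp γ)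
    (C : Multiset Q) :
    (∃ C0 C' : Multiset Q, (∀ q, q ≠ qin → C0.count q = 0) ∧ C ≤ C' ∧
      Relation.ReflTransGen (NBStep T) C0 C') ↔
    (∃ C'' : Multiset Q, C'' ∈ Interp γf ∧ C ≤ C'') := by
  -- lift monotonicity to reflexive-transitive closure
  have rtmono : ∀ C C' D : Multiset Q, Relation.ReflTransGen (NBStep T) C C' → C ≤ D →
      ∃ D', Relation.ReflTransGen (NBStep T) D D' ∧ C' ≤ D' := by
    intro C C' D h
    induction h with
    | refl => exact fun hle => ⟨D, Relation.ReflTransGen.refl, hle⟩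
    | tail _ hstep ih =>
      intro hle
      obtain ⟨D', hD', hle'⟩ := ih hle
      obtain ⟨D'', hstep', hle''⟩ := hmono _ _ _ hstep hle'
      exact ⟨D'', hD'.tail hstep', hle''⟩
  constructor
  · rintro ⟨C0, C', h0, hle, hsteps⟩
    -- C0 ∈ Interp γ0 ⊆ Interp γf
    have hsub : ∀ i, Interp γ0 ⊆ Interp (F^[i] γ0) := by
      intro i
      induction i with
      | zero => simp
      | succ i ih =>
        rw [Function.iterate_succ_apply']
        exact ih.trans (hgrow _)
    have hC0 : C0 ∈ Interp γf := by
      rw [hγf]; apply hsub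
      rw [hinit]; exact h0
    have hconsf : Cons γf := hγf ▸ hconsi _
    have hC' : C' ∈ Interp γf := by
      clear hle
      induction hsteps with
      | refl => exact hC0
      | tail _ hstep ih =>
        have := hsound γf hconsf _ _ ih hstep
        rwa [hfix] at this
    exact ⟨C', hC', hle⟩
  · rintro ⟨C'', hC'', hle⟩
    have key : ∀ i, ∀ X : Multiset Q, X ∈ Interp (F^[i] γ0) →
        ∃ D C0 : Multiset Q, X ≤ D ∧ C0 ∈ Interp γ0 ∧
          Relation.ReflTransGen (NBStep T) C0 D := by
      intro i
      induction i with
      | zero => intro X hX; exact ⟨X, X, le_refl _, by simpa using hX, Relation.ReflTransGen.refl⟩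
      | succ i ih =>
        intro X hX
        rw [Function.iterate_succ_apply'] at hX
        obtain ⟨Y, Z, hXY, hZ, hsteps⟩ := hcomp _ (hconsi i) X hX
        obtain ⟨D, C0, hZD, hC0, hsteps0⟩ := ih Z hZ
        obtain ⟨D', hD', hYD'⟩ := rtmono _ _ _ hsteps hZD
        exact ⟨D', C0, hXY.trans hYD', hC0, hsteps0.trans hD'⟩
    rw [hγf] at hC''
    obtain ⟨D, C0, hD, hC0, hsteps⟩ := key _ _ hC''
    rw [hinit] at hC0
    exact ⟨C0, D, hC0, hle.trans hD, hsteps⟩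
end

section
/- (Unique leader invariant in the NB-R-CM-to-protocol reduction) Let P be the rendez-vous protocol built from an NB-R-CM M as in Figure 9, with distinguished states {q} ∪ Q_M (where Q_M contains the machine locations and auxiliary transition states). For every initial configuration C_0 (all processes in q_in) and every configuration C reachable from C_0 in at least one step, the total number of processes in {q} ∪ Q_M is exactly 1: Σ_{p ∈ {q} ∪ Q_M} C(p) = 1. -/
/-- Actions of a counter machine: increment, decrement, or no-op (⊥). -/
inductive CAct (X : Type) where
  | inc : X → CAct X
  | dec : X → CAct X
  | nop : CAct X
  deriving DecidableEq

/-- States of the protocol built from an NB-R-CM (Figure 9). -/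
inductive PState (L X : Type) where
  | qin : PState L X
  | q : PState L X
  | qbot : PState L X
  | loc : L → PState L X
  | aux : L × CAct X × L → PState L X
  | one : X → PState L X
  | qx : X → PState L X
  | q'x : X → PState L X
  deriving DecidableEq

/-- Messages of the protocol built from an NB-R-CM. -/
inductive Msg (X : Type) where
  | incm : X → Msg X
  | ackinc : X → Msg X
  | decm : X → Msg X
  | ackdec : X → Msg X
  | nbdecm : X → Msg X
  | L : Msg X
  | R : Msg X
  deriving DecidableEq

/-- The transitions of the protocol built from the NB-R-CM
`(db, dnb, lin)`. -/
inductive PTrans {L X : Type} (db : Set (L × CAct X × L))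
    (dnb : Set (L × X × L)) (lin : L) :
    PState L X → RVAct (Msg X) → PState L X → Prop where
  | incSend (ℓi : L) (x : X) (ℓj : L) (h : (ℓi, CAct.inc x, ℓj) ∈ db) :
      PTrans db dnb lin (.loc ℓi) (.send (.incm x)) (.aux (ℓi, CAct.inc x, ℓj))
  | incAck (ℓi : L) (x : X) (ℓj : L) (h : (ℓi, CAct.inc x, ℓj) ∈ db) :
      PTrans db dnb lin (.aux (ℓi, CAct.inc x, ℓj)) (.recv (.ackinc x)) (.loc ℓj)
  | decSend (ℓi : L) (x : X) (ℓj : L) (h : (ℓi, CAct.dec x, ℓj) ∈ db) :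
      PTrans db dnb lin (.loc ℓi) (.send (.decm x)) (.aux (ℓi, CAct.dec x, ℓj))
  | decAck (ℓi : L) (x : X) (ℓj : L) (h : (ℓi, CAct.dec x, ℓj) ∈ db) :
      PTrans db dnb lin (.aux (ℓi, CAct.dec x, ℓj)) (.recv (.ackdec x)) (.loc ℓj)
  | nbdecSend (ℓi : L) (x : X) (ℓj : L) (h : (ℓi, x, ℓj) ∈ dnb) :
      PTrans db dnb lin (.loc ℓi) (.send (.nbdecm x)) (.loc ℓj)
  | tauStep (ℓi ℓj : L) (h : (ℓi, CAct.nop, ℓj) ∈ db) :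
      PTrans db dnb lin (.loc ℓi) .tau (.loc ℓj)
  | initL : PTrans db dnb lin .qin (.send .L) .q
  | qR : PTrans db dnb lin .q (.send .R) (.loc lin)
  | qL : PTrans db dnb lin .q (.recv .L) .qbot
  | locL (ℓ : L) : PTrans db dnb lin (.loc ℓ) (.recv .L) .qbot
  | auxL (δ : L × CAct X × L) (h : δ ∈ db) :
      PTrans db dnb lin (.aux δ) (.recv .L) .qbot
  | incRecv (x : X) : PTrans db dnb lin .qin (.recv (.incm x)) (.qx x)
  | incAckSend (x : X) : PTrans db dnb lin (.qx x) (.send (.ackinc x)) (.one x)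
  | decRecv (x : X) : PTrans db dnb lin (.one x) (.recv (.decm x)) (.q'x x)
  | decAckSend (x : X) : PTrans db dnb lin (.q'x x) (.send (.ackdec x)) .qin
  | nbdecRecv (x : X) : PTrans db dnb lin (.one x) (.recv (.nbdecm x)) .qin
  | qxR (x : X) : PTrans db dnb lin (.qx x) (.recv .R) .qin
  | q'xR (x : X) : PTrans db dnb lin (.q'x x) (.recv .R) .qin

/-- The transition set of the protocol of Figure 9, as a set. -/
def PTransSet {L X : Type} (db : Set (L × CAct X × L))
    (dnb : Set (L × X × L)) (lin : L) :
    Set (PState L X × RVAct (Msg X) × PState L X) :=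
  {t | PTrans db dnb lin t.1 t.2.1 t.2.2}

/-- The "leader zone" `{q} ∪ Q_M` of the protocol. -/
def isLeader {L X : Type} : PState L X → Bool
  | .q => true
  | .loc _ => true
  | .aux _ => true
  | _ => false

namespace Multiset

variable {α : Type*}

theorem countP_sub_add_add_countP [DecidableEq α] {C M : Multiset α} (hM : M ≤ C)
    (M' : Multiset α) (p : α → Prop) [DecidablePred p] :
    (C - M + M').countP p + M.countP p = C.countP p + M'.countP p := by
  have := countP_le_of_le p hM
  rw [countP_add, countP_sub hM]
  omega

theorem countP_singleton (p : α → Prop) [DecidablePred p] (a : α) :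
    ({a} : Multiset α).countP p = if p a then 1 else 0 := by
  rw [← cons_zero, countP_cons, countP_zero, zero_add]

theorem pair_le_of_ne {a b : α} {C : Multiset α} (hab : a ≠ b) (ha : a ∈ C) (hb : b ∈ C) :
    {a, b} ≤ C :=
  (cons_le_of_notMem (by simpa using hab)).2 ⟨ha, singleton_le.2 hb⟩

end Multiset

namespace NBStep

variable {Q A : Type} [DecidableEq Q] {T : Set (Q × RVAct A × Q)}

theorem forall_mem {P : Q → Prop} (hT : ∀ t ∈ T, P t.2.2) {C C' : Multiset Q}
    (hstep : NBStep T C C') (hC : ∀ s ∈ C, P s) : ∀ s ∈ C', P s := by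
  have hreplace : ∀ M M' : Multiset Q, (∀ s ∈ M', P s) → ∀ s ∈ C - M + M', P s := by
    intro M M' hM' s hs
    rcases Multiset.mem_add.mp hs with hs | hs
    · exact hC s (Multiset.mem_of_le tsub_le_self hs)
    · exact hM' s hs
  cases hstep with
  | internal q q' ht => exact hreplace _ _ (by simpa using hT _ ht)
  | rdv m q1 q1' q2 q2' ht1 ht2 => exact hreplace _ _ (by simpa using ⟨hT _ ht1, hT _ ht2⟩)
  | nb m q1 q1' ht => exact hreplace _ _ (by simpa using hT _ ht)

end NBStep

section isLeader

variable {L X : Type}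

@[simp] theorem isLeader_qin : isLeader (.qin : PState L X) = false := rfl

@[simp] theorem isLeader_q : isLeader (.q : PState L X) = true := rfl

@[simp] theorem isLeader_qbot : isLeader (.qbot : PState L X) = false := rfl

end isLeader

/-- `aux δ` is a state of the protocol only for `δ ∈ db`; only those states receive `L`. -/
def PState.Admissible {L X : Type} (db : Set (L × CAct X × L)) : PState L X → Prop
  | .aux δ => δ ∈ db
  | _ => True

theorem mem_PTransSet {L X : Type} {db : Set (L × CAct X × L)} {dnb : Set (L × X × L)} {lin : L}
    {s s' : PState L X} {a : RVAct (Msg X)} :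
    (s, a, s') ∈ PTransSet db dnb lin ↔ PTrans db dnb lin s a s' :=
  Iff.rfl

namespace PTrans

variable {L X : Type} {db : Set (L × CAct X × L)} {dnb : Set (L × X × L)} {lin : L}
  {s s' r r' : PState L X} {a : RVAct (Msg X)}

theorem admissible_target (h : PTrans db dnb lin s a s') :
    s'.Admissible db := by
  cases h <;> simp_all [PState.Admissible]

theorem isLeader_eq (h : PTrans db dnb lin s a s')
    (hs : a ≠ .send .L) (hr : a ≠ .recv .L) : isLeader s' = isLeader s := by
  cases h <;> simp_all [isLeader]

theorem of_send_L (h : PTrans db dnb lin s (.send .L) s') : s = .qin ∧ s' = .q := by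
  cases h; simp

theorem of_recv_L (h : PTrans db dnb lin s (.recv .L) s') :
    isLeader s = true ∧ s' = .qbot := by
  cases h <;> simp [isLeader]

theorem exists_recv_L (hs : isLeader s = true) (had : s.Admissible db) :
    ∃ s', PTrans db dnb lin s (.recv .L) s' := by
  cases s with
  | q => exact ⟨_, qL⟩
  | loc ℓ => exact ⟨_, locL ℓ⟩
  | aux δ => exact ⟨_, auxL δ had⟩
  | _ => simp [isLeader] at hs

theorem ne_of_send_of_recv {m : Msg X} (h : PTrans db dnb lin s (.send m) s')
    (h' : PTrans db dnb lin r (.recv m) r') : s ≠ r := by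
  cases h <;> cases h' <;> simp

theorem of_qin (h : PTrans db dnb lin .qin a s') :
    a = .send .L ∧ s' = .q ∨ ∃ x, a = .recv (.incm x) ∧ s' = .qx x := by
  cases h <;> simp

end PTrans

section UniqueLeader

variable {L X : Type} [DecidableEq L] [DecidableEq X] {db : Set (L × CAct X × L)}
  {dnb : Set (L × X × L)} {lin : L} {C0 C C' : Multiset (PState L X)}

theorem admissible_of_reflTransGen (hinit : ∀ s ∈ C0, s = .qin)
    (hreach : Relation.ReflTransGen (NBStep (PTransSet db dnb lin)) C0 C) :
    ∀ s ∈ C, s.Admissible db := by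
  induction hreach with
  | refl => intro s hs; simp [hinit s hs, PState.Admissible]
  | tail _ hstep ih => exact hstep.forall_mem (fun _ ht => PTrans.admissible_target ht) ih

theorem countP_isLeader_of_step_of_initial (hinit : ∀ s ∈ C0, s = .qin)
    (hstep : NBStep (PTransSet db dnb lin) C0 C) :
    C.countP (fun s => isLeader s = true) = 1 := by
  cases hstep with
  | internal q1 q1' ht h1 =>
    rw [mem_PTransSet, hinit q1 (Multiset.count_pos.1 h1)] at ht
    simpa using ht.of_qin
  | rdv m q1 q1' q2 q2' ht1 ht2 h1 h2 =>
    rw [mem_PTransSet, hinit q1 (Multiset.count_pos.1 h1)] at ht1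
    rw [mem_PTransSet, hinit q2 (Multiset.count_pos.1 h2)] at ht2
    exact absurd rfl (ht1.ne_of_send_of_recv ht2)
  | nb m q1 q1' ht h1 =>
    obtain rfl := hinit q1 (Multiset.count_pos.1 h1)
    obtain ⟨-, rfl⟩ : Msg.L = m ∧ q1' = .q := by
      simpa [eq_comm] using (mem_PTransSet.1 ht).of_qin
    have hC0 : C0.countP (fun s => isLeader s = true) = 0 :=
      Multiset.countP_eq_zero.2 fun s hs => by simp [hinit s hs]
    have := Multiset.countP_sub_add_add_countP
      (Multiset.singleton_le.2 (Multiset.count_pos.1 h1)) {.q} (fun s => isLeader s = true)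
    simpa [Multiset.countP_singleton, hC0] using this

theorem countP_isLeader_step (hadm : ∀ s ∈ C, s.Admissible db)
    (hC : C.countP (fun s => isLeader s = true) = 1)
    (hstep : NBStep (PTransSet db dnb lin) C C') :
    C'.countP (fun s => isLeader s = true) = 1 := by
  have preserved {M M' : Multiset (PState L X)} (hM : M ≤ C)
      (heq : M.countP (fun s => isLeader s = true) = M'.countP (fun s => isLeader s = true)) :
      (C - M + M').countP (fun s => isLeader s = true) = 1 := by
    have := Multiset.countP_sub_add_add_countP hM M' (fun s => isLeader s = true)
    omega
  cases hstep with
  | internal q1 q1' ht h1 =>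
    refine preserved (Multiset.singleton_le.2 (Multiset.count_pos.1 h1)) ?_
    simp [Multiset.countP_singleton, (mem_PTransSet.1 ht).isLeader_eq (by simp) (by simp)]
  | rdv m q1 q1' q2 q2' ht1 ht2 h1 h2 =>
    rw [mem_PTransSet] at ht1 ht2
    -- `h12` does not give `{q1, q2} ≤ C` when `q1 = q2`; distinctness does
    refine preserved (Multiset.pair_le_of_ne (ht1.ne_of_send_of_recv ht2)
      (Multiset.count_pos.1 h1) (Multiset.count_pos.1 h2)) ?_
    by_cases hm : m = .L
    · subst hm
      obtain ⟨rfl, rfl⟩ := ht1.of_send_L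
      obtain ⟨hq2, rfl⟩ := ht2.of_recv_L
      simp [Multiset.countP_cons, Multiset.countP_singleton, hq2]
    · simp [Multiset.countP_cons, Multiset.countP_singleton,
        ht1.isLeader_eq (by simpa) (by simp), ht2.isLeader_eq (by simp) (by simpa)]
  | nb m q1 q1' ht h1 hno =>
    rw [mem_PTransSet] at ht
    by_cases hm : m = .L
    · subst hm
      obtain ⟨rfl, rfl⟩ := ht.of_send_L
      obtain ⟨s, hs, hleader⟩ := Multiset.countP_pos.1 (hC ▸ Nat.one_pos)
      obtain ⟨s', hs'⟩ := PTrans.exists_recv_L (dnb := dnb) (lin := lin) hleader (hadm s hs)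
      have hne : s ≠ .qin := by rintro rfl; simp at hleader
      have := hno s s' hs'
      rw [Multiset.sub_singleton, Multiset.count_erase_of_ne hne, Multiset.count_eq_zero] at this
      exact absurd hs this
    · refine preserved (Multiset.singleton_le.2 (Multiset.count_pos.1 h1)) ?_
      simp [Multiset.countP_singleton, ht.isLeader_eq (by simpa) (by simp)]

end UniqueLeader

theorem unique_leader_general {L X : Type} [DecidableEq L] [DecidableEq X]
    (db : Set (L × CAct X × L)) (dnb : Set (L × X × L)) (lin : L)
    (C0 C : Multiset (PState L X))
    (hinit : ∀ s, s ≠ PState.qin → C0.count s = 0)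
    (hreach : Relation.TransGen (NBStep (PTransSet db dnb lin)) C0 C) :
    C.countP (fun s => isLeader s = true) = 1 := by
  have hqin : ∀ s ∈ C0, s = .qin := fun s hs =>
    by_contra fun h => (Multiset.count_pos.2 hs).ne' (hinit s h)
  induction hreach with
  | single hstep => exact countP_isLeader_of_step_of_initial hqin hstep
  | tail hreach hstep ih =>
    exact countP_isLeader_step (admissible_of_reflTransGen hqin hreach.to_reflTransGen) ih hstep

/-- unique leader invariant: in every configuration reachable
in at least one step from an initial configuration, exactly one process is
in `{q} ∪ Q_M`. -/
theorem unique_leader {L X : Type} [DecidableEq L] [DecidableEq X]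
    (db : Set (L × CAct X × L)) (dnb : Set (L × X × L)) (lin : L)
    (hrestore : ∀ ℓ : L, (ℓ, CAct.nop, lin) ∈ db)
    (C0 C : Multiset (PState L X))
    (hinit : ∀ s, s ≠ PState.qin → C0.count s = 0)
    (hreach : Relation.TransGen (NBStep (PTransSet db dnb lin)) C0 C) :
    C.countP (fun s => isLeader s = true) = 1 :=
  unique_leader_general db dnb lin C0 C hinit hreach
end
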